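/- arXiv:1407.5028 — 13 statements merged into one kernel-verified Lean document; each statement's English description precedes it below -/
import Mathlib

section
/- Let f be an integer additive set-labeling of a simple graph G with respect to a ground set X such that the combined map f* is injective on V(G) ∪ E(G). If a vertex v of G has set-label f(v) = {0}, then v is an isolated vertex of G. -/
open Finset Pointwise

/-- The induced edge-label map: `f⁺(uv) = f(u) + f(v)` (sum set). -/
def edgeLabel {V : Type*} (f : V → Finset ℕ) : Sym2 V → Finset ℕ :=
  Sym2.lift ⟨fun u v => f u + f v, fun u v => add_comm (f u) (f v)⟩

/-- An integer additive set-labeling of `G` w.r.t. ground set `X`: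
an injective assignment of nonempty subsets of `X` to the vertices. -/
def IsIASL {V : Type*} (X : Finset ℕ) (f : V → Finset ℕ) : Prop :=
  Function.Injective f ∧ (∀ v, (f v).Nonempty) ∧ (∀ v, f v ⊆ X)

/-- An integer additive set-indexer: an IASL whose induced edge map is
injective on the edge set. -/
def IsIASI {V : Type*} (G : SimpleGraph V) (X : Finset ℕ) (f : V → Finset ℕ) : Prop :=
  IsIASL X f ∧ Set.InjOn (edgeLabel f) G.edgeSet

/-- The family of vertex labels. -/
def vertexLabels {V : Type*} (f : V → Finset ℕ) : Set (Finset ℕ) := Set.range f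

/-- The family of edge labels. -/
def edgeLabels {V : Type*} (G : SimpleGraph V) (f : V → Finset ℕ) : Set (Finset ℕ) :=
  edgeLabel f '' G.edgeSet

/-- An integer additive set-sequential labeling: an IASI such that the vertex and
edge labels together are exactly the nonempty subsets of `X`. -/
def IsIASSL {V : Type*} (G : SimpleGraph V) (X : Finset ℕ) (f : V → Finset ℕ) : Prop :=
  IsIASI G X f ∧
    vertexLabels f ∪ edgeLabels G f = {A : Finset ℕ | A ⊆ X ∧ A.Nonempty}

/-- An integer additive set-sequential indexer: an IASSL whose vertex labels and
edge labels are disjoint (equivalently, the combined map `f*` is injective). -/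
def IsIASSI {V : Type*} (G : SimpleGraph V) (X : Finset ℕ) (f : V → Finset ℕ) : Prop :=
  IsIASSL G X f ∧ Disjoint (vertexLabels f) (edgeLabels G f)

/-- A nonempty subset `A` of `X` is a non-trivial sum set in `X` if `A = B + C`
for nonempty subsets `B, C ⊆ X`, neither equal to `{0}`. -/
def IsNontrivialSumset (X A : Finset ℕ) : Prop :=
  ∃ B C : Finset ℕ, B.Nonempty ∧ C.Nonempty ∧ B ⊆ X ∧ C ⊆ X ∧
    B ≠ {0} ∧ C ≠ {0} ∧ A = B + C

/-- The combined map `f*` on vertices and edges of `G`. -/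
def fStar {V : Type*} (G : SimpleGraph V) (f : V → Finset ℕ) :
    V ⊕ G.edgeSet → Finset ℕ :=
  Sum.elim f (fun e => edgeLabel f e.1)

/-- If the combined map `f*` is injective and a vertex `v` has set-label `{0}`,
then `v` is an isolated vertex (degree 0). -/
theorem isolated_of_zero_label {V : Type*} [Fintype V] (G : SimpleGraph V)
    [DecidableRel G.Adj] (X : Finset ℕ) (hX : X.Nonempty)
    (f : V → Finset ℕ) (hf : IsIASL X f)
    (hinj : Function.Injective (fStar G f))
    (v : V) (hv : f v = ({0} : Finset ℕ)) :
    G.degree v = 0 := by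
  by_contra h
  obtain ⟨u, hu⟩ : ∃ u, G.Adj v u := by
    have := (G.degree_pos_iff_exists_adj v).mp (Nat.pos_of_ne_zero h)
    exact this
  have he : s(v, u) ∈ G.edgeSet := hu
  have hlab : fStar G f (Sum.inr ⟨s(v, u), he⟩) = fStar G f (Sum.inl u) := by
    simp only [fStar, Sum.elim_inr, Sum.elim_inl, edgeLabel, Sym2.lift_mk, hv]
    rw [show ({0} : Finset ℕ) = 0 from rfl, zero_add]
  exact absurd (hinj hlab) (by simp)
end

section
/- Let G be a simple graph with n vertices and m edges that admits an integer additive set-sequential labeling f with respect to a ground set X, and let κ be the number of subsets of X that are simultaneously the set-label of a vertex and the set-label of an edge, i.e., κ = |f(V(G)) ∩ f⁺(E(G))|. Then n + m = 2^{|X|} − 1 + κ. -/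
open Finset Pointwise

/-- If `f` is an IASSL of `G` w.r.t. `X`, then `n + m = 2^{|X|} - 1 + κ`, where
`κ` is the number of subsets of `X` that are labels of both a vertex and an edge. -/
theorem iassl_card_identity {V : Type*} [Fintype V] (G : SimpleGraph V)
    [DecidableRel G.Adj] (X : Finset ℕ) (hX : X.Nonempty)
    (f : V → Finset ℕ) (h : IsIASSL G X f) :
    Fintype.card V + G.edgeFinset.card =
      2 ^ X.card - 1 + (vertexLabels f ∩ edgeLabels G f).ncard := by
  obtain ⟨⟨⟨hinj, _, _⟩, hinjE⟩, hunion⟩ := h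
  have hVfin : (vertexLabels f).Finite := Set.finite_range f
  have hEfin : (edgeLabels G f).Finite := (Set.toFinite G.edgeSet).image _
  have hV : (vertexLabels f).ncard = Fintype.card V := by
    rw [vertexLabels, ← Set.image_univ, Set.ncard_image_of_injective _ hinj,
      Set.ncard_univ, Nat.card_eq_fintype_card]
  have hE : (edgeLabels G f).ncard = G.edgeFinset.card := by
    rw [edgeLabels, Set.ncard_image_of_injOn hinjE, ← SimpleGraph.coe_edgeFinset,
      Set.ncard_coe_finset]
  have hU : (vertexLabels f ∪ edgeLabels G f).ncard = 2 ^ X.card - 1 := by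
    rw [hunion]
    have : {A : Finset ℕ | A ⊆ X ∧ A.Nonempty} = ↑(X.powerset.erase ∅) := by
      ext A; simp [Finset.mem_powerset, Finset.nonempty_iff_ne_empty, and_comm]
    rw [this, Set.ncard_coe_finset, Finset.card_erase_of_mem (by simp),
      Finset.card_powerset]
  have key := Set.ncard_union_add_ncard_inter (vertexLabels f) (edgeLabels G f) hVfin hEfin
  omega
end

section
/- Let f be an integer additive set-sequential labeling of a simple graph G with respect to a ground set X, and let κ = |f(V(G)) ∩ f⁺(E(G))| be the number of subsets of X that are simultaneously the set-label of a vertex and the set-label of an edge. If |V(G)| and |E(G)| have the same parity, then κ is odd; if |V(G)| and |E(G)| have different parity, then κ is even. -/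
open Finset Pointwise

/-- Parity of `κ`: if `|V|` and `|E|` have the same parity then `κ` is odd;
if they have different parity then `κ` is even. -/
theorem iassl_kappa_parity {V : Type*} [Fintype V] (G : SimpleGraph V)
    [DecidableRel G.Adj] (X : Finset ℕ) (hX : X.Nonempty)
    (f : V → Finset ℕ) (h : IsIASSL G X f) :
    ((Even (Fintype.card V) ↔ Even G.edgeFinset.card) →
        Odd (vertexLabels f ∩ edgeLabels G f).ncard) ∧
    (¬ (Even (Fintype.card V) ↔ Even G.edgeFinset.card) →
        Even (vertexLabels f ∩ edgeLabels G f).ncard) := by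
  obtain ⟨⟨⟨hinj, hne, hsub⟩, hinjE⟩, hcover⟩ := h
  have hVfin : (vertexLabels f).Finite := Set.finite_range f
  have hEfin : (edgeLabels G f).Finite := (Set.toFinite G.edgeSet).image _
  have hV : (vertexLabels f).ncard = Fintype.card V := by
    rw [vertexLabels, ← Set.image_univ, Set.ncard_image_of_injective _ hinj,
      Set.ncard_univ, Nat.card_eq_fintype_card]
  have hE : (edgeLabels G f).ncard = G.edgeFinset.card := by
    rw [edgeLabels, Set.ncard_image_of_injOn hinjE, ← SimpleGraph.coe_edgeFinset,
      Set.ncard_coe_finset]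
  have hU : (vertexLabels f ∪ edgeLabels G f).ncard = 2 ^ X.card - 1 := by
    rw [hcover]
    have hset : {A : Finset ℕ | A ⊆ X ∧ A.Nonempty} = ↑(X.powerset.erase ∅) := by
      ext A
      simp [Finset.nonempty_iff_ne_empty, and_comm]
    rw [hset, Set.ncard_coe_finset, Finset.card_erase_of_mem (by simp),
      Finset.card_powerset]
  have hIE : (vertexLabels f ∩ edgeLabels G f).ncard +
      (vertexLabels f ∪ edgeLabels G f).ncard =
      (vertexLabels f).ncard + (edgeLabels G f).ncard :=
    Set.ncard_inter_add_ncard_union _ _ hVfin hEfin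
  rw [hV, hE, hU] at hIE
  have h2 : 2 ≤ 2 ^ X.card := by
    have : 1 ≤ X.card := hX.card_pos
    calc 2 = 2 ^ 1 := rfl
    _ ≤ 2 ^ X.card := Nat.pow_le_pow_right (by norm_num) this
  have hdvd : 2 ∣ 2 ^ X.card := dvd_pow_self 2 (by
    have : 1 ≤ X.card := hX.card_pos
    omega)
  constructor <;> intro hp <;>
    simp only [Nat.even_iff, Nat.odd_iff] at hp ⊢ <;> omega
end

section
/- Let G be a simple graph admitting an integer additive set-sequential labeling with respect to a ground set X. Then G has at least ρ vertices, where ρ is the number of nonempty subsets of X that are not non-trivial sum sets in X. -/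
open Finset Pointwise

/-- A graph admitting an IASSL w.r.t. `X` has at least `ρ` vertices, where `ρ` is
the number of nonempty subsets of `X` that are not non-trivial sum sets in `X`. -/
theorem iassl_min_vertices {V : Type*} [Fintype V] (G : SimpleGraph V)
    (X : Finset ℕ) (hX : X.Nonempty) (f : V → Finset ℕ) (h : IsIASSL G X f) :
    {A : Finset ℕ | A ⊆ X ∧ A.Nonempty ∧ ¬ IsNontrivialSumset X A}.ncard ≤
      Fintype.card V := by
  obtain ⟨⟨⟨hinj, hne, hsub⟩, _⟩, hcover⟩ := h
  have hsubset : {A : Finset ℕ | A ⊆ X ∧ A.Nonempty ∧ ¬ IsNontrivialSumset X A}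
      ⊆ Set.range f := by
    rintro A ⟨hAX, hAne, hAns⟩
    have hmem : A ∈ vertexLabels f ∪ edgeLabels G f := by
      rw [hcover]; exact ⟨hAX, hAne⟩
    rcases hmem with hv | he
    · exact hv
    · obtain ⟨e, heE, heq⟩ := he
      induction e using Sym2.ind with
      | _ u v =>
        have hA : A = f u + f v := by
          simpa [edgeLabel] using heq.symm
        by_cases hu : f u = {0}
        · refine ⟨v, ?_⟩
          rw [hA, hu]
          simp [Finset.singleton_add]
        by_cases hv : f v = {0}
        · refine ⟨u, ?_⟩
          rw [hA, hv]
          simp [Finset.add_singleton]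
        · exact absurd ⟨f u, f v, hne u, hne v, hsub u, hsub v, hu, hv, hA⟩ hAns
  calc {A : Finset ℕ | A ⊆ X ∧ A.Nonempty ∧ ¬ IsNontrivialSumset X A}.ncard
      ≤ (Set.range f).ncard :=
        Set.ncard_le_ncard hsubset (Set.finite_range f)
    _ ≤ Fintype.card V := by
        rw [Set.ncard_eq_toFinset_card']
        simpa using Finset.card_image_le (s := Finset.univ) (f := f)
end

section
/- Let G be a connected simple graph with at least two vertices that admits an integer additive set-sequential labeling f with respect to a ground set X with 0 ∈ X. Let 𝓑 be the collection of nonempty subsets A of X such that A is not a non-trivial sum set in X and A + D is not a subset of X for any nonempty subset D of X with D ≠ {0}. If 𝓑 is nonempty, then (1) {0} is the set-label of some vertex of G, and (2) G has at least |𝓑| pendant vertices. -/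
open Finset Pointwise

lemma sumset_eq_singleton_zero {A C : Finset ℕ} (hA : A.Nonempty) (hC : C.Nonempty)
    (h : A + C = {0}) : A = {0} ∧ C = {0} := by
  obtain ⟨a, ha⟩ := hA
  obtain ⟨c, hc⟩ := hC
  have hAs : A ⊆ {0} := by
    intro x hx
    have : x + c ∈ A + C := Finset.add_mem_add hx hc
    rw [h, Finset.mem_singleton] at this
    simp [Finset.mem_singleton]; omega
  have hCs : C ⊆ {0} := by
    intro x hx
    have : a + x ∈ A + C := Finset.add_mem_add ha hx
    rw [h, Finset.mem_singleton] at this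
    simp [Finset.mem_singleton]; omega
  have ha0 : a = 0 := by simpa using hAs ha
  have hc0 : c = 0 := by simpa using hCs hc
  constructor
  · exact Finset.Subset.antisymm hAs (Finset.singleton_subset_iff.mpr (ha0 ▸ ha))
  · exact Finset.Subset.antisymm hCs (Finset.singleton_subset_iff.mpr (hc0 ▸ hc))

lemma exists_adj_of_conn {V : Type*} [Fintype V] {G : SimpleGraph V}
    (hconn : G.Connected) (hcard : 2 ≤ Fintype.card V) (w : V) : ∃ u, G.Adj w u := by
  obtain ⟨v, hv⟩ := Fintype.exists_ne_of_one_lt_card (by omega) w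
  obtain ⟨p⟩ := hconn.preconnected w v
  exact ⟨p.getVert 1, p.adj_snd (SimpleGraph.Walk.not_nil_of_ne (Ne.symm hv))⟩

/-- For a connected IASS-graph, if the family `𝓑` of nonempty subsets of `X`
that are neither non-trivial sum sets in `X` nor have any sum set with a
nontrivial subset of `X` contained in `X` is nonempty, then `{0}` labels some
vertex and `G` has at least `|𝓑|` pendant vertices. -/
theorem iassl_pendant_bound {V : Type*} [Fintype V] (G : SimpleGraph V)
    [DecidableRel G.Adj] (hconn : G.Connected) (hcard : 2 ≤ Fintype.card V)
    (X : Finset ℕ) (h0 : 0 ∈ X) (f : V → Finset ℕ) (h : IsIASSL G X f)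
    (B : Set (Finset ℕ))
    (hB : B = {A : Finset ℕ | A ⊆ X ∧ A.Nonempty ∧ ¬ IsNontrivialSumset X A ∧
      ∀ D : Finset ℕ, D.Nonempty → D ⊆ X → D ≠ {0} → ¬ (A + D ⊆ X)})
    (hBne : B.Nonempty) :
    (∃ v : V, f v = ({0} : Finset ℕ)) ∧
      B.ncard ≤ {v : V | G.degree v = 1}.ncard := by
  obtain ⟨⟨⟨hinj, hne, hsub⟩, _hinjE⟩, hcover⟩ := h
  -- every nonempty subset of X is a vertex or edge label
  have hmem : ∀ A : Finset ℕ, A ⊆ X → A.Nonempty →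
      A ∈ vertexLabels f ∨ A ∈ edgeLabels G f := by
    intro A hAX hAne
    have : A ∈ vertexLabels f ∪ edgeLabels G f := by
      rw [hcover]; exact ⟨hAX, hAne⟩
    exact this
  -- edge labels are subsets of X
  have hedge_sub : ∀ e ∈ G.edgeSet, edgeLabel f e ⊆ X := by
    intro e he
    have : edgeLabel f e ∈ vertexLabels f ∪ edgeLabels G f :=
      Or.inr ⟨e, he, rfl⟩
    rw [hcover] at this
    exact this.1
  -- edge label formula
  have hEL : ∀ u v : V, edgeLabel f s(u, v) = f u + f v := fun u v => rfl
  -- {0} is a vertex label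
  have hzero : ∃ v : V, f v = ({0} : Finset ℕ) := by
    rcases hmem {0} (by simpa using h0) (Finset.singleton_nonempty 0) with h1 | h1
    · obtain ⟨v, hv⟩ := h1; exact ⟨v, hv⟩
    · exfalso
      obtain ⟨e, he, heq⟩ := h1
      induction e using Sym2.ind with
      | _ u v =>
        rw [hEL] at heq
        obtain ⟨hu, hv⟩ := sumset_eq_singleton_zero (hne u) (hne v) heq
        exact ((SimpleGraph.mem_edgeSet G).mp he).ne (hinj (hu.trans hv.symm))
  refine ⟨hzero, ?_⟩
  obtain ⟨v₀, hv₀⟩ := hzero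
  -- every A ∈ B is a vertex label
  have hvert : ∀ A ∈ B, ∃ w, f w = A := by
    intro A hA
    rw [hB] at hA
    obtain ⟨hAX, hAne, hAns, hAD⟩ := hA
    rcases hmem A hAX hAne with h1 | h1
    · obtain ⟨w, hw⟩ := h1; exact ⟨w, hw⟩
    · obtain ⟨e, he, heq⟩ := h1
      induction e using Sym2.ind with
      | _ u v =>
        rw [hEL] at heq
        by_cases hu : f u = {0}
        · refine ⟨v, ?_⟩
          rw [← heq, hu]
          exact (zero_add (f v) : (0:Finset ℕ) + f v = f v).symm
        · by_cases hv : f v = {0}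
          · refine ⟨u, ?_⟩
            rw [← heq, hv]
            exact (add_zero (f u) : f u + (0:Finset ℕ) = f u).symm
          · exact absurd ⟨f u, f v, hne u, hne v, hsub u, hsub v, hu, hv, heq.symm⟩ hAns
  -- the witness vertex of each A ∈ B is pendant
  have hpend : ∀ A ∈ B, ∀ w, f w = A → G.degree w = 1 := by
    intro A hA w hw
    rw [hB] at hA
    obtain ⟨hAX, hAne, hAns, hAD⟩ := hA
    -- all neighbors of w are labeled {0}
    have hnbr : ∀ u, G.Adj w u → f u = ({0} : Finset ℕ) := by
      intro u hu
      by_contra hne0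
      have he : s(w, u) ∈ G.edgeSet := hu
      have hsubX : f w + f u ⊆ X := by
        have := hedge_sub _ he
        rwa [hEL] at this
      rw [hw] at hsubX
      exact hAD (f u) (hne u) (hsub u) hne0 hsubX
    have hnbr' : ∀ u, G.Adj w u → u = v₀ := by
      intro u hu
      exact hinj ((hnbr u hu).trans hv₀.symm)
    have h1 : G.degree w ≤ 1 := by
      rw [← SimpleGraph.card_neighborFinset_eq_degree]
      refine Finset.card_le_one.mpr ?_
      intro a ha b hb
      rw [SimpleGraph.mem_neighborFinset] at ha hb
      rw [hnbr' a ha, hnbr' b hb]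
    have h2 : 0 < G.degree w := by
      rw [SimpleGraph.degree_pos_iff_exists_adj]
      exact exists_adj_of_conn hconn hcard w
    omega
  -- build the injection
  have hg : ∀ A : Finset ℕ, ∃ w : V, A ∈ B → f w = A := by
    intro A
    by_cases hA : A ∈ B
    · exact (hvert A hA).imp (fun w hw _ => hw)
    · exact ⟨v₀, fun hc => absurd hc hA⟩
  choose g hgspec using hg
  refine Set.ncard_le_ncard_of_injOn g (fun A hA => hpend A hA _ (hgspec A hA)) ?_
    (Set.toFinite _)
  intro a ha b hb hab
  have : f (g a) = f (g b) := by rw [hab]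
  rwa [hgspec a ha, hgspec b hb] at this
end

section
/- Every connected simple graph with at least two vertices that admits an integer additive set-sequential labeling with respect to a ground set X with 0 ∈ X has at least one pendant vertex. -/
open Finset Pointwise

/-- Every connected graph with at least two vertices admitting an IASSL w.r.t.
a ground set `X` containing `0` has at least one pendant vertex. -/
theorem iassl_has_pendant {V : Type*} [Fintype V] (G : SimpleGraph V)
    [DecidableRel G.Adj] (hconn : G.Connected) (hcard : 2 ≤ Fintype.card V)
    (X : Finset ℕ) (h0 : 0 ∈ X) (f : V → Finset ℕ) (h : IsIASSL G X f) :
    ∃ v : V, G.degree v = 1 := by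
  obtain ⟨⟨⟨hinj, hnon, hsub⟩, _hinjE⟩, hcover⟩ := h
  have hXne : X.Nonempty := ⟨0, h0⟩
  set M := X.max' hXne with hMdef
  have hMX : M ∈ X := X.max'_mem hXne
  -- Step 1: some vertex label contains M
  have hOM : ({0, M} : Finset ℕ) ∈ vertexLabels f ∪ edgeLabels G f := by
    rw [hcover]
    refine ⟨?_, by simp⟩
    intro a ha
    rcases Finset.mem_insert.mp ha with rfl | ha
    · exact h0
    · rw [Finset.mem_singleton.mp ha]; exact hMX
  have hw : ∃ w : V, M ∈ f w := by
    rcases hOM with ⟨w, hwv⟩ | ⟨e, he, hlab⟩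
    · exact ⟨w, by rw [hwv]; simp⟩
    · induction e using Sym2.ind with
      | _ u v =>
        have hadj : G.Adj u v := he
        have hsum : f u + f v = {0, M} := hlab
        by_cases hu : M ∈ f u
        · exact ⟨u, hu⟩
        by_cases hv : M ∈ f v
        · exact ⟨v, hv⟩
        exfalso
        -- 0 ∈ f u and 0 ∈ f v
        have h0mem : (0 : ℕ) ∈ f u + f v := by rw [hsum]; simp
        obtain ⟨a, ha, b, hb, hab⟩ := Finset.mem_add.mp h0mem
        obtain ⟨ha0, hb0⟩ := Nat.add_eq_zero.mp hab
        subst ha0; subst hb0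
        -- f u = {0}
        have hfu : f u = {0} := by
          apply Finset.eq_singleton_iff_unique_mem.mpr
          refine ⟨ha, fun x hx => ?_⟩
          have : x ∈ f u + f v := by
            have := Finset.add_mem_add hx hb
            simpa using this
          rw [hsum] at this
          rcases Finset.mem_insert.mp this with rfl | hxM
          · rfl
          · exact absurd (Finset.mem_singleton.mp hxM ▸ hx) hu
        have hfv : f v = {0} := by
          apply Finset.eq_singleton_iff_unique_mem.mpr
          refine ⟨hb, fun x hx => ?_⟩
          have : x ∈ f u + f v := by
            have := Finset.add_mem_add ha hx
            simpa using this
          rw [hsum] at this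
          rcases Finset.mem_insert.mp this with rfl | hxM
          · rfl
          · exact absurd (Finset.mem_singleton.mp hxM ▸ hx) hv
        exact hadj.ne (hinj (hfu.trans hfv.symm))
  obtain ⟨w, hMw⟩ := hw
  -- Step 2: every neighbor of w is labeled {0}
  have hnbr : ∀ u : V, G.Adj w u → f u = {0} := by
    intro u hadj
    have hmem : edgeLabel f s(w, u) ∈ vertexLabels f ∪ edgeLabels G f :=
      Or.inr ⟨s(w, u), hadj, rfl⟩
    rw [hcover] at hmem
    have hsubX : f w + f u ⊆ X := hmem.1
    apply Finset.eq_singleton_iff_unique_mem.mpr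
    have hzero : ∀ x ∈ f u, x = 0 := by
      intro x hx
      have : M + x ∈ X := hsubX (Finset.add_mem_add hMw hx)
      have hle : M + x ≤ M := X.le_max' _ this
      omega
    obtain ⟨y, hy⟩ := hnon u
    have hy0 := hzero y hy
    exact ⟨hy0 ▸ hy, hzero⟩
  -- Step 3: w has at least one neighbor
  obtain ⟨u, hune⟩ := Fintype.exists_ne_of_one_lt_card (by omega) w
  obtain ⟨p⟩ := hconn.preconnected w u
  have hpnil : ¬ p.Nil := SimpleGraph.Walk.not_nil_of_ne (Ne.symm hune)
  have hadj0 : G.Adj w (p.getVert 1) := p.adj_snd hpnil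
  -- Step 4: degree is exactly 1
  refine ⟨w, ?_⟩
  have : G.neighborFinset w = {p.getVert 1} := by
    ext x
    simp only [SimpleGraph.mem_neighborFinset, Finset.mem_singleton]
    constructor
    · intro hx
      exact hinj ((hnbr x hx).trans (hnbr _ hadj0).symm)
    · rintro rfl; exact hadj0
  rw [SimpleGraph.degree, this, Finset.card_singleton]
end

section
/- For every n ≥ 3, the cycle graph Cₙ does not admit an integer additive set-sequential labeling with respect to any ground set X. -/
open Finset Pointwise

/-- No cycle `Cₙ` (`n ≥ 3`) admits an IASSL with respect to any ground set. -/
theorem cycle_not_iassl (n : ℕ) (hn : 3 ≤ n) (X : Finset ℕ) (hX : X.Nonempty) :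
    ¬ ∃ f : Fin n → Finset ℕ, IsIASSL (SimpleGraph.cycleGraph n) X f := by
  obtain ⟨m, rfl⟩ : ∃ m, n = m + 3 := ⟨n - 3, by omega⟩
  rintro ⟨f, ⟨⟨finj, fne, fsub⟩, einj⟩, hcover⟩
  set G := SimpleGraph.cycleGraph (m + 3) with hG
  set M := X.max' hX with hM
  -- every edge label is a nonempty subset of X
  have hedge : ∀ {u v : Fin (m + 3)}, G.Adj u v → f u + f v ⊆ X := by
    intro u v huv
    have hmem : f u + f v ∈ vertexLabels f ∪ edgeLabels G f := by
      right
      exact ⟨s(u, v), huv, rfl⟩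
    rw [hcover] at hmem
    exact hmem.1
  -- Step A: no vertex label contains M
  have hA : ∀ z, M ∉ f z := by
    intro z hz
    have key : ∀ y, G.Adj z y → f y = {0} := by
      intro y hy
      have hsub : f y ⊆ {0} := by
        intro b hb
        have : M + b ∈ X := hedge hy (Finset.add_mem_add hz hb)
        have : M + b ≤ M := X.le_max' _ this
        simp only [Finset.mem_singleton]
        omega
      exact ((fne y).subset_singleton_iff).mp hsub
    have hadj1 : G.Adj z (z + 1) := by
      rw [hG, SimpleGraph.cycleGraph_adj]
      right; exact add_sub_cancel_left z 1
    have hadj2 : G.Adj z (z - 1) := by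
      rw [hG, SimpleGraph.cycleGraph_adj]
      left; exact sub_sub_cancel z 1
    have h1 := key _ hadj1
    have h2 := key _ hadj2
    have heq : z + 1 = z - 1 := finj (h1.trans h2.symm)
    have hzlt := z.isLt
    have hone : ((1 : Fin (m + 3))).val = 1 := by
      rw [Fin.val_one']; exact Nat.mod_eq_of_lt (by omega)
    have hval := congrArg Fin.val heq
    have ha : ((z + 1 : Fin (m + 3))).val = (z.val + 1) % (m + 3) := by
      simp [Fin.add_def, hone]
    have hb : ((z - 1 : Fin (m + 3))).val = (m + 3 - 1 + z.val) % (m + 3) := by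
      simp [Fin.sub_def, hone]
    rw [ha, hb] at hval
    by_cases hz0 : z.val = 0
    · rw [hz0] at hval
      have l1 : (0 + 1) % (m + 3) = 1 := Nat.mod_eq_of_lt (by omega)
      have l2 : (m + 3 - 1 + 0) % (m + 3) = m + 2 := by
        rw [show m + 3 - 1 + 0 = m + 2 by omega]; exact Nat.mod_eq_of_lt (by omega)
      rw [l1, l2] at hval; omega
    · have l2 : (m + 3 - 1 + z.val) % (m + 3) = z.val - 1 := by
        rw [show m + 3 - 1 + z.val = (z.val - 1) + (m + 3) by omega, Nat.add_mod_right]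
        exact Nat.mod_eq_of_lt (by omega)
      rw [l2] at hval
      by_cases hzm : z.val = m + 2
      · rw [hzm, show m + 2 + 1 = m + 3 by omega, Nat.mod_self] at hval; omega
      · rw [Nat.mod_eq_of_lt (by omega)] at hval; omega
  -- Step B: n + 1 ≤ card of powerset of X.erase M
  classical
  have hB : m + 3 + 1 ≤ ((X.erase M).powerset).card := by
    have himg : insert (∅ : Finset ℕ) (Finset.image f Finset.univ) ⊆ (X.erase M).powerset := by
      intro A hA'
      rcases Finset.mem_insert.mp hA' with h | h
      · simp [h]
      · obtain ⟨v, _, rfl⟩ := Finset.mem_image.mp h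
        exact Finset.mem_powerset.mpr (Finset.subset_erase.mpr ⟨fsub v, hA v⟩)
    calc m + 3 + 1 = (insert (∅ : Finset ℕ) (Finset.image f Finset.univ)).card := by
          rw [Finset.card_insert_of_notMem, Finset.card_image_of_injective _ finj,
            Finset.card_univ, Fintype.card_fin]
          intro h
          obtain ⟨v, _, hv⟩ := Finset.mem_image.mp h
          exact (fne v).ne_empty hv
      _ ≤ _ := Finset.card_le_card himg
  -- Step C: card of powerset ≤ number of edges = m + 3
  have hcard_edges : G.edgeFinset.card = m + 3 := by
    have hdeg := G.sum_degrees_eq_twice_card_edges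
    have : ∀ v : Fin (m + 3), G.degree v = 2 := fun v =>
      SimpleGraph.cycleGraph_degree_three_le
    rw [Finset.sum_congr rfl fun v _ => this v, Finset.sum_const, Finset.card_univ,
      Fintype.card_fin, smul_eq_mul] at hdeg
    omega
  have hexists : ∀ A ∈ (X.erase M).powerset,
      ∃ e ∈ G.edgeSet, edgeLabel f e = insert M A := by
    intro A hA'
    have hAX : A ⊆ X := (Finset.mem_powerset.mp hA').trans (Finset.erase_subset _ _)
    have hmem : insert M A ∈ vertexLabels f ∪ edgeLabels G f := by
      rw [hcover]
      exact ⟨Finset.insert_subset (X.max'_mem hX) hAX, Finset.insert_nonempty _ _⟩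
    rcases hmem with ⟨v, hv⟩ | ⟨e, he, heq⟩
    · exact absurd (hv ▸ Finset.mem_insert_self M A) (hA v)
    · exact ⟨e, he, heq⟩
  let g : Finset ℕ → Sym2 (Fin (m + 3)) := fun A =>
    if h : ∃ e ∈ G.edgeSet, edgeLabel f e = insert M A then h.choose else s(0, 0)
  have hgspec : ∀ A ∈ (X.erase M).powerset,
      g A ∈ G.edgeSet ∧ edgeLabel f (g A) = insert M A := by
    intro A hA'
    have h := hexists A hA'
    simp only [g, dif_pos h]
    exact h.choose_spec
  have hC : ((X.erase M).powerset).card ≤ G.edgeFinset.card := by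
    apply Finset.card_le_card_of_injOn g
    · intro A hA'
      exact SimpleGraph.mem_edgeFinset.mpr (hgspec A hA').1
    · intro A hA' B hB' hgAB
      have h1 := (hgspec A hA').2
      have h2 := (hgspec B hB').2
      rw [hgAB, h2] at h1
      have hMA : M ∉ A := fun h => (Finset.mem_erase.mp ((Finset.mem_powerset.mp hA') h)).1 rfl
      have hMB : M ∉ B := fun h => (Finset.mem_erase.mp ((Finset.mem_powerset.mp hB') h)).1 rfl
      rw [← Finset.erase_insert hMA, h1.symm, Finset.erase_insert hMB]
  omega
end

section
/- For every n ≥ 2, the complete graph Kₙ does not admit an integer additive set-sequential labeling with respect to any ground set X. -/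
open Finset Pointwise

/-
The largest element `M` of `X` lies in no vertex label: if `M ∈ f t`, every other vertex must be
labelled `{0}`, so the only labels available are `f t` and `{0}`, too few to cover both `{M}` and
`{0, M}`. Hence `X` and `{0, M}`, which contain `M`, are edge labels. From `f u ⊆ X = f u + f v`
one gets `0 ∈ X`, and `{0, M} = f u + f v` forces `0 ∈ f u, f v`, so that
`f u, f v ⊆ {0, M} \ {M}`, i.e. `f u = f v = {0}`, contradicting injectivity.
-/

theorem Finset.zero_mem_of_subset_add {A B : Finset ℕ} (hA : A.Nonempty) (h : A ⊆ A + B) :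
    0 ∈ B := by
  obtain ⟨a, ha, b, hb, hab⟩ := mem_add.mp (h (A.min'_mem hA))
  have : A.min' hA ≤ a := A.min'_le a ha
  rwa [show b = 0 by omega] at hb

theorem Finset.zero_mem_right_of_zero_mem_add {A B : Finset ℕ} (h : 0 ∈ A + B) : 0 ∈ B := by
  obtain ⟨a, -, b, hb, hab⟩ := mem_add.mp h
  rwa [show b = 0 by omega] at hb

theorem Finset.eq_zero_of_add_subset {A B X : Finset ℕ} {M : ℕ}
    (hM : IsGreatest (X : Set ℕ) M) (hMA : M ∈ A) (hB : B.Nonempty) (h : A + B ⊆ X) :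
    B = {0} := by
  refine hB.subset_singleton_iff.mp fun b hb => mem_singleton.mpr ?_
  have := hM.2 (h (add_mem_add hMA hb))
  omega

open SimpleGraph

namespace IsIASSL

variable {V : Type*} {X : Finset ℕ} {f : V → Finset ℕ}

theorem injective {G : SimpleGraph V} (hf : IsIASSL G X f) : Function.Injective f := hf.1.1.1

theorem label_nonempty {G : SimpleGraph V} (hf : IsIASSL G X f) (v : V) : (f v).Nonempty :=
  hf.1.1.2.1 v

theorem label_subset {G : SimpleGraph V} (hf : IsIASSL G X f) (v : V) : f v ⊆ X := hf.1.1.2.2 v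

theorem add_subset (hf : IsIASSL (completeGraph V) X f) {u v : V} (huv : u ≠ v) :
    f u + f v ⊆ X := by
  have : f u + f v ∈ vertexLabels f ∪ edgeLabels (completeGraph V) f :=
    Or.inr ⟨s(u, v), huv, rfl⟩
  rw [hf.2] at this
  exact this.1

theorem exists_eq_or_exists_add_eq (hf : IsIASSL (completeGraph V) X f) {A : Finset ℕ}
    (hAX : A ⊆ X) (hA : A.Nonempty) :
    (∃ u, f u = A) ∨ ∃ u v, u ≠ v ∧ f u + f v = A := by
  have : A ∈ vertexLabels f ∪ edgeLabels (completeGraph V) f := by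
    rw [hf.2]
    exact ⟨hAX, hA⟩
  obtain h | ⟨e, he, rfl⟩ := this
  · exact Or.inl h
  · induction e using Sym2.ind with
    | _ u v => exact Or.inr ⟨u, v, he, rfl⟩

theorem eq_or_eq_zero_of_forall_ne (hf : IsIASSL (completeGraph V) X f) {t : V}
    (ht : ∀ v, v ≠ t → f v = {0}) {A : Finset ℕ} (hAX : A ⊆ X) (hA : A.Nonempty) :
    A = f t ∨ A = {0} := by
  have vertex : ∀ u, f u = f t ∨ f u = {0} := fun u => by
    by_cases hu : u = t
    · exact Or.inl (congrArg f hu)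
    · exact Or.inr (ht u hu)
  obtain ⟨u, rfl⟩ | ⟨u, v, huv, rfl⟩ := hf.exists_eq_or_exists_add_eq hAX hA
  · exact vertex u
  · by_cases hu : u = t
    · subst hu
      rw [ht v (Ne.symm huv), singleton_zero, add_zero]
      exact Or.inl rfl
    · rw [ht u hu, singleton_zero, zero_add]
      exact vertex v

theorem max_notMem [Nontrivial V] (hf : IsIASSL (completeGraph V) X f) {M : ℕ}
    (hM : IsGreatest (X : Set ℕ) M) (t : V) : M ∉ f t := by
  intro hMt
  have ht : ∀ v, v ≠ t → f v = {0} := fun v hv =>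
    eq_zero_of_add_subset hM hMt (hf.label_nonempty v) (hf.add_subset (Ne.symm hv))
  obtain ⟨v, hv⟩ := exists_ne t
  by_cases hM0 : M = 0
  · have : f t = {0} := (hf.label_nonempty t).subset_singleton_iff.mp fun x hx => by
      have := hM.2 (hf.label_subset t hx)
      rw [mem_singleton]
      omega
    exact hv (hf.injective ((ht v hv).trans this.symm))
  · have h0X : 0 ∈ X := hf.label_subset v (by rw [ht v hv]; exact mem_singleton_self 0)
    have hMX := singleton_subset_iff.mpr hM.1
    obtain hsingle | hsingle := hf.eq_or_eq_zero_of_forall_ne ht hMX (singleton_nonempty M)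
    · obtain hpair | hpair := hf.eq_or_eq_zero_of_forall_ne ht (insert_subset h0X hMX)
        (insert_nonempty 0 {M})
      · have : 0 ∈ ({M} : Finset ℕ) := hsingle ▸ hpair ▸ mem_insert_self 0 {M}
        exact hM0 (mem_singleton.mp this).symm
      · have : M ∈ ({0} : Finset ℕ) := hpair ▸ mem_insert_of_mem (mem_singleton_self M)
        exact hM0 (mem_singleton.mp this)
    · exact hM0 (singleton_injective hsingle)

theorem exists_add_eq_of_max_mem [Nontrivial V] (hf : IsIASSL (completeGraph V) X f) {M : ℕ}
    (hM : IsGreatest (X : Set ℕ) M) {A : Finset ℕ} (hAX : A ⊆ X) (hMA : M ∈ A) :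
    ∃ u v, u ≠ v ∧ f u + f v = A := by
  obtain ⟨u, rfl⟩ | h := hf.exists_eq_or_exists_add_eq hAX ⟨M, hMA⟩
  · exact absurd hMA (hf.max_notMem hM u)
  · exact h

theorem zero_mem [Nontrivial V] (hf : IsIASSL (completeGraph V) X f) (hX : X.Nonempty) :
    0 ∈ X := by
  obtain ⟨u, v, -, huv⟩ := hf.exists_add_eq_of_max_mem (X.isGreatest_max' hX) subset_rfl
    (X.max'_mem hX)
  exact hf.label_subset v (zero_mem_of_subset_add (hf.label_nonempty u) (huv ▸ hf.label_subset u))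

theorem eq_zero_of_add_eq_pair [Nontrivial V] (hf : IsIASSL (completeGraph V) X f) {M : ℕ}
    (hM : IsGreatest (X : Set ℕ) M) {a b : V} (h : f a + f b = {0, M}) : f a = {0} := by
  have h0b : 0 ∈ f b := zero_mem_right_of_zero_mem_add (h ▸ mem_insert_self 0 {M})
  refine (hf.label_nonempty a).subset_singleton_iff.mp fun x hx => ?_
  have hx' : x ∈ ({0, M} : Finset ℕ) := h ▸ subset_add_left (f a) h0b hx
  rw [mem_insert, mem_singleton] at hx'
  rcases hx' with rfl | rfl
  · exact mem_singleton_self 0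
  · exact absurd hx (hf.max_notMem hM a)

end IsIASSL

/-- No complete graph `Kₙ` (`n ≥ 2`) admits an IASSL with respect to any ground set. -/
theorem complete_not_iassl (n : ℕ) (hn : 2 ≤ n) (X : Finset ℕ) (hX : X.Nonempty) :
    ¬ ∃ f : Fin n → Finset ℕ, IsIASSL (SimpleGraph.completeGraph (Fin n)) X f := by
  rintro ⟨f, hf⟩
  have : Nontrivial (Fin n) := Fin.nontrivial_iff_two_le.mpr hn
  have hM := X.isGreatest_max' hX
  have hpair : {0, X.max' hX} ⊆ X :=
    insert_subset (hf.zero_mem hX) (singleton_subset_iff.mpr hM.1)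
  obtain ⟨u, v, huv, hsum⟩ :=
    hf.exists_add_eq_of_max_mem hM hpair (mem_insert_of_mem (mem_singleton_self _))
  have hu := hf.eq_zero_of_add_eq_pair hM hsum
  have hv := hf.eq_zero_of_add_eq_pair hM ((add_comm _ _).trans hsum)
  exact huv (hf.injective (hu.trans hv.symm))
end

section
/- For all m, n ≥ 2, the complete bipartite graph K_{m,n} does not admit an integer additive set-sequential labeling with respect to any ground set X. -/
open Finset Pointwise

lemma myMax'_add (B C : Finset ℕ) (hB : B.Nonempty) (hC : C.Nonempty) :
    (B + C).max' (hB.add hC) = B.max' hB + C.max' hC := by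
  apply le_antisymm
  · apply Finset.max'_le
    intro z hz
    rw [Finset.mem_add] at hz
    obtain ⟨b, hb, c, hc, rfl⟩ := hz
    exact add_le_add (Finset.le_max' _ _ hb) (Finset.le_max' _ _ hc)
  · exact Finset.le_max' _ _ (Finset.add_mem_add (B.max'_mem hB) (C.max'_mem hC))

lemma myMin'_add (B C : Finset ℕ) (hB : B.Nonempty) (hC : C.Nonempty) :
    (B + C).min' (hB.add hC) = B.min' hB + C.min' hC := by
  apply le_antisymm
  · exact Finset.min'_le _ _ (Finset.add_mem_add (B.min'_mem hB) (C.min'_mem hC))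
  · apply Finset.le_min'
    intro z hz
    rw [Finset.mem_add] at hz
    obtain ⟨b, hb, c, hc, rfl⟩ := hz
    exact add_le_add (Finset.min'_le _ _ hb) (Finset.min'_le _ _ hc)

/-- No complete bipartite graph `K_{m,n}` (`m, n ≥ 2`) admits an IASSL with
respect to any ground set. -/
theorem completeBipartite_not_iassl (m n : ℕ) (hm : 2 ≤ m) (hn : 2 ≤ n)
    (X : Finset ℕ) (hX : X.Nonempty) :
    ¬ ∃ f : Fin m ⊕ Fin n → Finset ℕ,
        IsIASSL (completeBipartiteGraph (Fin m) (Fin n)) X f := by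
  rintro ⟨f, ⟨⟨⟨hinj, hne, hsub⟩, -⟩, hcover⟩⟩
  have hadj : ∀ (a : Fin m) (b : Fin n),
      (completeBipartiteGraph (Fin m) (Fin n)).Adj (Sum.inl a) (Sum.inr b) := by
    intro a b; simp
  -- cross sums are subsets of X
  have hcross : ∀ (a : Fin m) (b : Fin n), f (Sum.inl a) + f (Sum.inr b) ⊆ X := by
    intro a b
    have hmem : (f (Sum.inl a) + f (Sum.inr b)) ∈
        vertexLabels f ∪ edgeLabels (completeBipartiteGraph (Fin m) (Fin n)) f :=
      Or.inr ⟨s(Sum.inl a, Sum.inr b), hadj a b, rfl⟩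
    rw [hcover] at hmem
    exact hmem.1
  -- every nonempty subset of X is a vertex label or a cross sum
  have hlab : ∀ A : Finset ℕ, A ⊆ X → A.Nonempty →
      (∃ v, f v = A) ∨ ∃ (a : Fin m) (b : Fin n), f (Sum.inl a) + f (Sum.inr b) = A := by
    intro A hA hAne
    have hmem : A ∈ vertexLabels f ∪ edgeLabels (completeBipartiteGraph (Fin m) (Fin n)) f := by
      rw [hcover]; exact ⟨hA, hAne⟩
    rcases hmem with h | h
    · exact Or.inl h
    · obtain ⟨e, he, hve⟩ := h
      right
      induction e using Sym2.ind with
      | _ x y =>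
        rw [SimpleGraph.mem_edgeSet] at he
        rcases x with a | a <;> rcases y with b | b
        · simp at he
        · exact ⟨a, b, hve⟩
        · exact ⟨b, a, by rw [← hve]; exact add_comm _ _⟩
        · simp at he
  set M := X.max' hX with hMdef
  -- two distinct vertices on each side
  have h01m : (⟨0, by omega⟩ : Fin m) ≠ ⟨1, by omega⟩ := by simp
  have h01n : (⟨0, by omega⟩ : Fin n) ≠ ⟨1, by omega⟩ := by simp
  -- M > 0
  have hM0 : 0 < M := by
    by_contra h
    push_neg at h
    interval_cases M
    have hXeq : X = {0} := by
      apply Finset.Subset.antisymm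
      · intro x hx
        have := Finset.le_max' X x hx
        simp only [Finset.mem_singleton]
        omega
      · intro x hx
        simp only [Finset.mem_singleton] at hx
        subst hx
        rw [hMdef]
        exact X.max'_mem hX
    have key : ∀ a : Fin m, f (Sum.inl a) = {0} := by
      intro a
      have h1 : f (Sum.inl a) ⊆ {0} := hXeq ▸ hsub (Sum.inl a)
      rcases Finset.subset_singleton_iff.mp h1 with h | h
      · exact absurd h (hne _).ne_empty
      · exact h
    exact h01m (Sum.inl_injective (hinj ((key _).trans (key _).symm)))
  -- no vertex is labeled X
  have hnoX : ∀ v, f v ≠ X := by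
    rintro v hv
    have M_mem : M ∈ X := X.max'_mem hX
    match v with
    | Sum.inl a =>
      have key : ∀ b : Fin n, f (Sum.inr b) = {0} := by
        intro b
        have h1 : f (Sum.inl a) + f (Sum.inr b) ⊆ X := hcross a b
        apply Finset.Subset.antisymm
        · intro c hc
          have : M + c ∈ X := h1 (Finset.add_mem_add (hv ▸ M_mem) hc)
          have := Finset.le_max' X _ this
          simp only [Finset.mem_singleton]
          omega
        · intro c hc
          simp only [Finset.mem_singleton] at hc
          subst hc
          obtain ⟨c, hc⟩ := hne (Sum.inr b)
          have : M + c ∈ X := h1 (Finset.add_mem_add (hv ▸ M_mem) hc)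
          have := Finset.le_max' X _ this
          have : c = 0 := by omega
          rwa [← this]
      exact h01n (Sum.inr_injective (hinj ((key _).trans (key _).symm)))
    | Sum.inr b =>
      have key : ∀ a : Fin m, f (Sum.inl a) = {0} := by
        intro a
        have h1 : f (Sum.inl a) + f (Sum.inr b) ⊆ X := hcross a b
        apply Finset.Subset.antisymm
        · intro c hc
          have : c + M ∈ X := h1 (Finset.add_mem_add hc (hv ▸ M_mem))
          have := Finset.le_max' X _ this
          simp only [Finset.mem_singleton]
          omega
        · intro c hc
          simp only [Finset.mem_singleton] at hc
          subst hc
          obtain ⟨c, hc⟩ := hne (Sum.inl a)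
          have : c + M ∈ X := h1 (Finset.add_mem_add hc (hv ▸ M_mem))
          have := Finset.le_max' X _ this
          have : c = 0 := by omega
          rwa [← this]
      exact h01m (Sum.inl_injective (hinj ((key _).trans (key _).symm)))
  -- X is an edge label
  obtain ⟨a0, b0, hBC⟩ := (hlab X (Finset.Subset.refl X) hX).resolve_left (by
    rintro ⟨v, hv⟩; exact hnoX v hv)
  set B := f (Sum.inl a0) with hBdef
  set C := f (Sum.inr b0) with hCdef
  have hBne : B.Nonempty := hne _
  have hCne : C.Nonempty := hne _
  -- min X = 0
  have hminX : X.min' hX = 0 := by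
    have h1 : (B + C).min' (hBne.add hCne) = B.min' hBne + C.min' hCne :=
      myMin'_add B C hBne hCne
    have h2 : (B + C).min' (hBne.add hCne) = X.min' hX := by
      congr 1
    have h3 : X.min' hX ≤ B.min' hBne := Finset.min'_le _ _ (hsub _ (B.min'_mem hBne))
    have h4 : X.min' hX ≤ C.min' hCne := Finset.min'_le _ _ (hsub _ (C.min'_mem hCne))
    omega
  have h0X : (0 : ℕ) ∈ X := hminX ▸ X.min'_mem hX
  -- p + q = M
  set p := B.max' hBne with hpdef
  set q := C.max' hCne with hqdef
  have hpq : p + q = M := by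
    have h1 : (B + C).max' (hBne.add hCne) = p + q := myMax'_add B C hBne hCne
    have h2 : (B + C).max' (hBne.add hCne) = M := by congr 1
    omega
  -- q > 0, p > 0
  have hqpos : 0 < q := by
    rcases Nat.eq_zero_or_pos q with h | h
    · exfalso
      have hC0 : C = {0} := by
        apply Finset.Subset.antisymm
        · intro c hc
          have := Finset.le_max' C c hc
          simp only [Finset.mem_singleton]; omega
        · intro c hc
          simp only [Finset.mem_singleton] at hc
          subst hc
          have := C.max'_mem hCne
          rwa [← hqdef, h] at this
      apply hnoX (Sum.inl a0)
      have hBe : B + ({0} : Finset ℕ) = B := by ext x; simp [Finset.mem_add]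
      rw [← hBC, hC0, hBe]
    · exact h
  have hppos : 0 < p := by
    rcases Nat.eq_zero_or_pos p with h | h
    · exfalso
      have hB0 : B = {0} := by
        apply Finset.Subset.antisymm
        · intro c hc
          have := Finset.le_max' B c hc
          simp only [Finset.mem_singleton]; omega
        · intro c hc
          simp only [Finset.mem_singleton] at hc
          subst hc
          have := B.max'_mem hBne
          rwa [← hpdef, h] at this
      apply hnoX (Sum.inr b0)
      have hCe : ({0} : Finset ℕ) + C = C := by ext x; simp [Finset.mem_add]
      rw [← hBC, hB0, hCe]
    · exact h
  -- every left-vertex label is bounded by p, every right by q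
  have hleft : ∀ (a : Fin m), ∀ x ∈ f (Sum.inl a), x ≤ p := by
    intro a x hx
    have : x + q ∈ X := hcross a b0 (Finset.add_mem_add hx (C.max'_mem hCne))
    have := Finset.le_max' X _ this
    omega
  have hright : ∀ (b : Fin n), ∀ x ∈ f (Sum.inr b), x ≤ q := by
    intro b x hx
    have : p + x ∈ X := hcross a0 b (Finset.add_mem_add (B.max'_mem hBne) hx)
    have := Finset.le_max' X _ this
    omega
  -- the set {0, M} can't be a label
  have hSsub : ({0, M} : Finset ℕ) ⊆ X := by
    intro x hx
    rcases Finset.mem_insert.mp hx with h | h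
    · subst h; exact h0X
    · rw [Finset.mem_singleton] at h; subst h; exact X.max'_mem hX
  rcases hlab {0, M} hSsub ⟨0, by simp⟩ with ⟨v, hv⟩ | ⟨a, b, hab⟩
  · -- vertex labeled {0, M}: contains M, impossible
    have hMv : M ∈ f v := by rw [hv]; simp
    match v with
    | Sum.inl a =>
      have := hleft a M hMv
      omega
    | Sum.inr b =>
      have := hright b M hMv
      omega
  · -- edge labeled {0, M}
    have hane : (f (Sum.inl a)).Nonempty := hne _
    have hbne : (f (Sum.inr b)).Nonempty := hne _
    have hmin : (f (Sum.inl a)).min' hane + (f (Sum.inr b)).min' hbne = 0 := by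
      have h1 := myMin'_add _ _ hane hbne
      have h2 : ((f (Sum.inl a) + f (Sum.inr b)).min' (hane.add hbne)) = ({0, M} : Finset ℕ).min' ⟨0, by simp⟩ := by
        congr 1
      have h3 : ({0, M} : Finset ℕ).min' ⟨0, by simp⟩ = 0 := by
        apply le_antisymm
        · exact Finset.min'_le _ _ (by simp)
        · exact Nat.zero_le _
      omega
    have h0a : (0 : ℕ) ∈ f (Sum.inl a) := by
      have := (f (Sum.inl a)).min'_mem hane
      rwa [show (f (Sum.inl a)).min' hane = 0 by omega] at this
    have h0b : (0 : ℕ) ∈ f (Sum.inr b) := by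
      have := (f (Sum.inr b)).min'_mem hbne
      rwa [show (f (Sum.inr b)).min' hbne = 0 by omega] at this
    -- M ∈ {0,M} = sum, so M = x + y with x ≤ p, y ≤ q... but also each factor ⊆ {0,M}
    have hMmem : M ∈ f (Sum.inl a) + f (Sum.inr b) := by rw [hab]; simp
    rw [Finset.mem_add] at hMmem
    obtain ⟨x, hx, y, hy, hxy⟩ := hMmem
    have hxS : x ∈ ({0, M} : Finset ℕ) := by
      have h := Finset.add_mem_add hx h0b
      rw [hab] at h
      simpa using h
    have hyS : y ∈ ({0, M} : Finset ℕ) := by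
      have h := Finset.add_mem_add h0a hy
      rw [hab] at h
      simpa using h
    have hxp := hleft a x hx
    have hyq := hright b y hy
    have hx0 : x = 0 := by
      rcases Finset.mem_insert.mp hxS with h | h
      · exact h
      · rw [Finset.mem_singleton] at h; omega
    have hy0 : y = 0 := by
      rcases Finset.mem_insert.mp hyS with h | h
      · exact h
      · rw [Finset.mem_singleton] at h; omega
    omega
end

section
/- For every finite nonempty set X of non-negative integers with 0 ∈ X, there exists a connected simple graph G that admits an integer additive set-sequential labeling with respect to X. -/
open Finset Pointwise

/-!
Label the vertices of a star by all nonempty subsets of `X`, with `{0}` at the centre. Since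
`{0} + A = A`, the edge from the centre to the vertex labelled `A` is labelled `A` again, so the
edge labels are distinct and add nothing new to the vertex labels, which already exhaust the
nonempty subsets of `X`.
-/

open SimpleGraph

lemma SimpleGraph.exists_eq_mk_of_mem_edgeSet_starGraph {V : Type*} {c : V} {e : Sym2 V}
    (he : e ∈ (starGraph c).edgeSet) : ∃ v, e = s(c, v) := by
  induction e with
  | h u v =>
    rcases (starGraph_adj.mp he).2 with rfl | rfl
    · exact ⟨v, rfl⟩
    · exact ⟨u, Sym2.eq_swap⟩

section StarLabeling

variable {V : Type*} {c : V} {f : V → Finset ℕ}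

lemma edgeLabel_mk_of_eq_singleton_zero (hc : f c = {0}) (v : V) : edgeLabel f s(c, v) = f v := by
  change f c + f v = f v
  rw [hc, singleton_zero, zero_add]

lemma injOn_edgeLabel_starGraph (hf : Function.Injective f) (hc : f c = {0}) :
    Set.InjOn (edgeLabel f) (starGraph c).edgeSet := by
  intro e he e' he' hee'
  obtain ⟨v, rfl⟩ := exists_eq_mk_of_mem_edgeSet_starGraph he
  obtain ⟨v', rfl⟩ := exists_eq_mk_of_mem_edgeSet_starGraph he'
  rw [edgeLabel_mk_of_eq_singleton_zero hc, edgeLabel_mk_of_eq_singleton_zero hc] at hee'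
  rw [hf hee']

lemma edgeLabels_starGraph_subset (hc : f c = {0}) :
    edgeLabels (starGraph c) f ⊆ vertexLabels f := by
  rintro _ ⟨e, he, rfl⟩
  obtain ⟨v, rfl⟩ := exists_eq_mk_of_mem_edgeSet_starGraph he
  exact ⟨v, (edgeLabel_mk_of_eq_singleton_zero hc v).symm⟩

theorem isIASSL_starGraph {X : Finset ℕ} (hf : Function.Injective f) (hc : f c = {0})
    (hrange : Set.range f = {A | A ⊆ X ∧ A.Nonempty}) : IsIASSL (starGraph c) X f := by
  have hmem (v : V) : f v ⊆ X ∧ (f v).Nonempty := hrange.subset ⟨v, rfl⟩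
  refine ⟨⟨⟨hf, fun v => (hmem v).2, fun v => (hmem v).1⟩, injOn_edgeLabel_starGraph hf hc⟩, ?_⟩
  rw [Set.union_eq_left.mpr (edgeLabels_starGraph_subset hc)]
  exact hrange

end StarLabeling

theorem exists_connected_iassl_general (X : Finset ℕ) (h0 : 0 ∈ X) :
    ∃ (V : Type) (_ : Fintype V) (G : SimpleGraph V) (f : V → Finset ℕ),
      G.Connected ∧ IsIASSL G X f := by
  let labels : Finset (Finset ℕ) := X.powerset.filter Finset.Nonempty
  have mem_labels (A : Finset ℕ) : A ∈ labels ↔ A ⊆ X ∧ A.Nonempty := by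
    simp [labels]
  let c : labels := ⟨{0}, (mem_labels _).mpr ⟨singleton_subset_iff.mpr h0, singleton_nonempty 0⟩⟩
  refine ⟨labels, inferInstance, starGraph c, Subtype.val, connected_starGraph c,
    isIASSL_starGraph Subtype.val_injective rfl ?_⟩
  ext A
  simp [mem_labels]

/-- For every finite nonempty ground set `X` containing `0`, there exists a
connected graph admitting an IASSL with respect to `X`. -/
theorem exists_connected_iassl (X : Finset ℕ) (hX : X.Nonempty) (h0 : 0 ∈ X) :
    ∃ (V : Type) (_ : Fintype V) (G : SimpleGraph V) (f : V → Finset ℕ),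
      G.Connected ∧ IsIASSL G X f :=
  exists_connected_iassl_general X h0
end

section
/- Let G be a connected simple graph with at least two vertices admitting an integer additive set-sequential labeling f with respect to a ground set X with |X| ≥ 2, and let x_n be the maximum element of X. If a vertex v of G has a set-label f(v) containing x_n, then v is a pendant vertex and its unique neighbour u satisfies f(u) = {0}. -/
open Finset Pointwise

/-- In a connected IASS-graph, any vertex whose set-label contains the maximal
element of `X` is a pendant vertex whose unique neighbour has set-label `{0}`. -/
theorem max_element_label_pendant {V : Type*} [Fintype V] (G : SimpleGraph V)
    [DecidableRel G.Adj] (hconn : G.Connected) (hcard : 2 ≤ Fintype.card V)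
    (X : Finset ℕ) (hX : 2 ≤ X.card) (f : V → Finset ℕ) (h : IsIASSL G X f)
    (v : V) (hv : X.max' (Finset.card_pos.mp (by omega)) ∈ f v) :
    G.degree v = 1 ∧ ∀ u : V, G.Adj v u → f u = ({0} : Finset ℕ) := by
  classical
  set M := X.max' (Finset.card_pos.mp (by omega)) with hM
  obtain ⟨⟨⟨hinj, hne, hsub⟩, _⟩, htot⟩ := h
  have hnbr : ∀ u : V, G.Adj v u → f u = ({0} : Finset ℕ) := by
    intro u hadj
    have hedge : (f v + f u : Finset ℕ) ∈ vertexLabels f ∪ edgeLabels G f :=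
      Or.inr ⟨s(v, u), hadj, rfl⟩
    rw [htot] at hedge
    have hsubX : (f v + f u : Finset ℕ) ⊆ X := hedge.1
    have hz : ∀ a ∈ f u, a = 0 := by
      intro a ha
      have hmem : M + a ∈ X := hsubX (Finset.add_mem_add hv ha)
      have := X.le_max' _ hmem
      omega
    exact (Finset.Nonempty.subset_singleton_iff (hne u)).mp
      (fun a ha => Finset.mem_singleton.mpr (hz a ha))
  refine ⟨?_, hnbr⟩
  have hex : ∃ w, G.Adj v w := by
    obtain ⟨w, hw⟩ := Fintype.exists_ne_of_one_lt_card (by omega) v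
    obtain ⟨p⟩ := hconn.preconnected v w
    exact ⟨p.getVert 1, p.adj_snd (p.not_nil_of_ne (Ne.symm hw))⟩
  obtain ⟨w, hw⟩ := hex
  have hle : G.neighborFinset v ⊆ {w} := by
    intro u hu
    rw [SimpleGraph.mem_neighborFinset] at hu
    have : f u = f w := by rw [hnbr u hu, hnbr w hw]
    simp [hinj this]
  have : G.neighborFinset v = {w} :=
    Finset.Subset.antisymm hle (by simp [SimpleGraph.mem_neighborFinset, hw])
  rw [SimpleGraph.degree, this, Finset.card_singleton]
end

section
/- No connected simple graph with at least two vertices admits an integer additive set-sequential indexer with respect to any ground set X. -/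
open Finset Pointwise

/-- Unfolding `edgeLabel` on an explicit pair. -/
lemma edgeLabel_mk {V : Type*} (f : V → Finset ℕ) (u v : V) :
    edgeLabel f s(u, v) = f u + f v := rfl

/-- No connected graph with at least two vertices admits an integer additive
set-sequential indexer with respect to any ground set. -/
theorem connected_not_iassi {V : Type*} [Fintype V] (G : SimpleGraph V)
    (hconn : G.Connected) (hcard : 2 ≤ Fintype.card V)
    (X : Finset ℕ) (hX : X.Nonempty) (f : V → Finset ℕ) :
    ¬ IsIASSI G X f := by
  rintro ⟨⟨⟨⟨hinj, hne, hsub⟩, _⟩, hcover⟩, hdisj⟩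
  -- every vertex has a neighbor
  have hnbr : ∀ v : V, ∃ u, G.Adj v u := by
    intro v
    obtain ⟨u, hu⟩ := Fintype.exists_ne_of_one_lt_card (by omega) v
    obtain ⟨p⟩ := hconn.preconnected v u
    cases p with
    | nil => exact absurd rfl hu.symm
    | cons h _ => exact ⟨_, h⟩
  have hedgemem : ∀ {u v : V}, G.Adj u v → f u + f v ∈ edgeLabels G f := by
    intro u v h
    exact ⟨s(u, v), (G.mem_edgeSet).2 h, rfl⟩
  have hedge_sub : ∀ A ∈ edgeLabels G f, A ⊆ X := by
    intro A hA
    have : A ∈ vertexLabels f ∪ edgeLabels G f := Or.inr hA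
    rw [hcover] at this
    exact this.1
  by_cases h0 : 0 ∈ X
  · -- {0} is a label
    have hmem : ({0} : Finset ℕ) ∈ vertexLabels f ∪ edgeLabels G f := by
      rw [hcover]; exact ⟨by simpa using h0, singleton_nonempty 0⟩
    rcases hmem with ⟨v0, hv0⟩ | ⟨e, he, hlab⟩
    · -- vertex labeled {0}; its edge to a neighbor has label = neighbor's label
      obtain ⟨u, hu⟩ := hnbr v0
      have hE : f v0 + f u = f u := by
        rw [hv0]
        ext x
        simp [Finset.mem_add]
      exact Set.disjoint_left.mp hdisj ⟨u, rfl⟩ (hE ▸ hedgemem hu)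
    · -- edge labeled {0}: forces both endpoints labeled {0}
      induction e with
      | h u v =>
        have hadj : G.Adj u v := (G.mem_edgeSet).1 he
        rw [edgeLabel_mk] at hlab
        obtain ⟨x, hx⟩ := hne u
        obtain ⟨y, hy⟩ := hne v
        have hfu : f u = {0} := by
          apply Finset.eq_singleton_iff_nonempty_unique_mem.2
          refine ⟨⟨x, hx⟩, fun a ha => ?_⟩
          have : a + y ∈ f u + f v := Finset.add_mem_add ha hy
          rw [hlab] at this
          simp at this; omega
        have hfv : f v = {0} := by
          apply Finset.eq_singleton_iff_nonempty_unique_mem.2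
          refine ⟨⟨y, hy⟩, fun a ha => ?_⟩
          have : x + a ∈ f u + f v := Finset.add_mem_add hx ha
          rw [hlab] at this
          simp at this; omega
        exact hadj.ne (hinj (hfu.trans hfv.symm))
  · -- 0 ∉ X; consider the label X itself
    have hmem : X ∈ vertexLabels f ∪ edgeLabels G f := by
      rw [hcover]; exact ⟨subset_rfl, hX⟩
    rcases hmem with ⟨v0, hv0⟩ | ⟨e, he, hlab⟩
    · obtain ⟨u, hu⟩ := hnbr v0
      obtain ⟨y, hy⟩ := hne u
      have hEsub : f v0 + f u ⊆ X := hedge_sub _ (hedgemem hu)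
      have hM : X.max' hX + y ∈ f v0 + f u :=
        Finset.add_mem_add (hv0 ▸ X.max'_mem hX) hy
      have hle : X.max' hX + y ≤ X.max' hX := X.le_max' _ (hEsub hM)
      have : y = 0 := by omega
      exact h0 (hsub u (this ▸ hy))
    · induction e with
      | h u v =>
        rw [edgeLabel_mk] at hlab
        have ha : X.min' hX ∈ f u + f v := hlab ▸ X.min'_mem hX
        rw [Finset.mem_add] at ha
        obtain ⟨x, hx, y, hy, hxy⟩ := ha
        have h1 : X.min' hX ≤ x := X.min'_le _ (hsub u hx)
        have h2 : y ≠ 0 := fun h => h0 (h ▸ hsub v hy)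
        omega
end

section
/- Let G be a simple graph admitting an integer additive set-sequential indexer f with respect to a ground set X. Let 𝓑' be the collection of nonempty subsets A of X such that A is not a non-trivial sum set in X and A is not a non-trivial summand in X, where A is a non-trivial summand in X if A ≠ {0} and A + C ⊆ X for some nonempty subset C of X with C ≠ {0}. Then G has at least |𝓑'| isolated vertices. -/
open Finset Pointwise

/-- A nonempty subset `A` of `X` is a non-trivial summand in `X` if `A ≠ {0}`
and `A + C ⊆ X` for some nonempty subset `C ⊆ X` with `C ≠ {0}`. -/
def IsNontrivialSummand (X A : Finset ℕ) : Prop :=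
  A ≠ {0} ∧ ∃ C : Finset ℕ, C.Nonempty ∧ C ⊆ X ∧ C ≠ {0} ∧ A + C ⊆ X

namespace IsIASSI

variable {V : Type*} {G : SimpleGraph V} {X : Finset ℕ} {f : V → Finset ℕ}

lemma edgeLabel_subset (h : IsIASSI G X f) {e : Sym2 V} (he : e ∈ G.edgeSet) :
    edgeLabel f e ⊆ X := by
  have hmem : edgeLabel f e ∈ vertexLabels f ∪ edgeLabels G f := Or.inr ⟨e, he, rfl⟩
  rw [h.1.2] at hmem
  exact hmem.1

/-- Otherwise the edge `uv` would carry `{0} + f v = f v`, which is also a vertex label. -/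
lemma ne_singleton_zero_of_adj (h : IsIASSI G X f) {u v : V} (huv : G.Adj u v) :
    f u ≠ {0} := by
  intro hu
  have hedge : f v ∈ edgeLabels G f := ⟨s(u, v), huv, by
    change f u + f v = f v
    rw [hu, singleton_zero, zero_add]⟩
  exact h.2.ne_of_mem ⟨v, rfl⟩ hedge rfl

lemma isNontrivialSumset_of_mem_edgeLabels (h : IsIASSI G X f) {A : Finset ℕ}
    (hA : A ∈ edgeLabels G f) : IsNontrivialSumset X A := by
  obtain ⟨e, he, rfl⟩ := hA
  induction e using Sym2.ind with
  | _ u v =>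
    have hsub := h.1.1.1.2.2
    have hne := h.1.1.1.2.1
    exact ⟨f u, f v, hne u, hne v, hsub u, hsub v, h.ne_singleton_zero_of_adj he,
      h.ne_singleton_zero_of_adj (G.adj_symm he), rfl⟩

lemma isNontrivialSummand_of_adj (h : IsIASSI G X f) {u v : V} (huv : G.Adj u v) :
    IsNontrivialSummand X (f u) :=
  ⟨h.ne_singleton_zero_of_adj huv, f v, h.1.1.1.2.1 v, h.1.1.1.2.2 v,
    h.ne_singleton_zero_of_adj (G.adj_symm huv), h.edgeLabel_subset (e := s(u, v)) huv⟩

/-- A subset that is neither a non-trivial sum set nor a non-trivial summand can label neither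
an edge nor a non-isolated vertex. -/
lemma exists_isolated_of_not_sumset_of_not_summand [Fintype V] [DecidableRel G.Adj]
    (h : IsIASSI G X f) {A : Finset ℕ} (hAX : A ⊆ X) (hA : A.Nonempty)
    (hsumset : ¬ IsNontrivialSumset X A) (hsummand : ¬ IsNontrivialSummand X A) :
    ∃ v, G.degree v = 0 ∧ f v = A := by
  have hmem : A ∈ vertexLabels f ∪ edgeLabels G f := by
    rw [h.1.2]
    exact ⟨hAX, hA⟩
  obtain ⟨v, rfl⟩ : A ∈ vertexLabels f :=
    hmem.resolve_right fun hedge => hsumset (h.isNontrivialSumset_of_mem_edgeLabels hedge)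
  refine ⟨v, Nat.eq_zero_of_not_pos fun hpos => ?_, rfl⟩
  obtain ⟨u, hvu⟩ := (G.degree_pos_iff_exists_adj v).1 hpos
  exact hsummand (h.isNontrivialSummand_of_adj hvu)

end IsIASSI

theorem iassi_isolated_bound_general {V : Type*} [Fintype V] (G : SimpleGraph V)
    [DecidableRel G.Adj] (X : Finset ℕ)
    (f : V → Finset ℕ) (h : IsIASSI G X f) :
    {A : Finset ℕ | A ⊆ X ∧ A.Nonempty ∧ ¬ IsNontrivialSumset X A ∧
        ¬ IsNontrivialSummand X A}.ncard ≤
      {v : V | G.degree v = 0}.ncard := by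
  have hlabels : {A : Finset ℕ | A ⊆ X ∧ A.Nonempty ∧ ¬ IsNontrivialSumset X A ∧
      ¬ IsNontrivialSummand X A} ⊆ f '' {v : V | G.degree v = 0} := by
    rintro A ⟨hAX, hA, hsumset, hsummand⟩
    exact h.exists_isolated_of_not_sumset_of_not_summand hAX hA hsumset hsummand
  calc _ ≤ (f '' {v : V | G.degree v = 0}).ncard := Set.ncard_le_ncard hlabels
    _ ≤ _ := Set.ncard_image_le

/-- A graph admitting an IASSI has at least `|𝓑'|` isolated vertices, where `𝓑'`
is the family of nonempty subsets of `X` that are neither non-trivial sum sets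
nor non-trivial summands in `X`. -/
theorem iassi_isolated_bound {V : Type*} [Fintype V] (G : SimpleGraph V)
    [DecidableRel G.Adj] (X : Finset ℕ) (hX : X.Nonempty)
    (f : V → Finset ℕ) (h : IsIASSI G X f) :
    {A : Finset ℕ | A ⊆ X ∧ A.Nonempty ∧ ¬ IsNontrivialSumset X A ∧
        ¬ IsNontrivialSummand X A}.ncard ≤
      {v : V | G.degree v = 0}.ncard :=
  iassi_isolated_bound_general G X f h
end
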